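/- arXiv:quant-ph/9608006 — 3 statements merged into one kernel-verified Lean document; each statement's English description precedes it below -/
import Mathlib

section
/- Let C₁ ⊊ C₂ ⊆ 𝔽₂ⁿ be binary linear codes of dimensions k₁ < k₂, and regard 𝔽₂ as the prime subfield of GF(4). Define C = ωC₁ + ω̄C₂⊥ = {ωa + ω̄b : a ∈ C₁, b ∈ C₂⊥} ⊆ GF(4)ⁿ, where C₁⊥ and C₂⊥ denote Euclidean binary duals. Then: (i) C is an additive code with |C| = 2^{n−(k₂−k₁)}; (ii) C is self-orthogonal with respect to the trace inner product, and its trace dual is C⊥ = ω̄C₁⊥ + ωC₂ = {ω̄a + ωb : a ∈ C₁⊥, b ∈ C₂}; (iii) every vector of C⊥ ∖ C has Hamming weight at least min{ min{wt(u) : u ∈ C₂ ∖ C₁}, min{wt(u) : u ∈ C₁⊥ ∖ C₂⊥} }. (This yields an [[n, k₂−k₁, d]] quantum code with d = min{dist(C₂∖C₁), dist(C₁⊥∖C₂⊥)}.) -/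
noncomputable section

open Finset Polynomial

/-- The field `GF(4)` with four elements. -/
abbrev F4 := GaloisField 2 2

/-- The trace inner product `u∗v = Σⱼ (uⱼ v̄ⱼ + ūⱼ vⱼ)` on `GF(4)ⁿ`,
where conjugation is `x̄ = x²`.  It takes values in the prime subfield. -/
def trIP {n : ℕ} (u v : Fin n → F4) : F4 :=
  ∑ j, (u j * (v j) ^ 2 + (u j) ^ 2 * v j)

/-- The Hamming weight of a vector in `GF(4)ⁿ`. -/
def wt {n : ℕ} (u : Fin n → F4) : ℕ := Set.ncard {j | u j ≠ 0}

/-- The dual of a code with respect to the trace inner product. -/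
def trDual {n : ℕ} (C : Set (Fin n → F4)) : Set (Fin n → F4) :=
  {u | ∀ v ∈ C, trIP u v = 0}

/-- The Euclidean dual of a binary code. -/
def binDual {n : ℕ} (B : Set (Fin n → ZMod 2)) : Set (Fin n → ZMod 2) :=
  {w | ∀ b ∈ B, ∑ j, w j * b j = 0}

/-- Hamming weight of a binary vector. -/
def wtB {n : ℕ} (a : Fin n → ZMod 2) : ℕ := Set.ncard {j | a j ≠ 0}

/-- Multiply a binary vector (regarded in the prime subfield of GF(4)) by a
constant c ∈ GF(4). -/
def liftB {n : ℕ} (c : F4) (a : Fin n → ZMod 2) : Fin n → F4 :=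
  fun j => c * algebraMap (ZMod 2) F4 (a j)

/-- The code C = ω C₁ + ω̄ C₂⊥ of the Calderbank–Shor–Steane construction. -/
def cssCode {n : ℕ} (ω : F4) (C₁ C₂ : Submodule (ZMod 2) (Fin n → ZMod 2)) :
    Set (Fin n → F4) :=
  {u | ∃ a ∈ C₁, ∃ b ∈ binDual (C₂ : Set (Fin n → ZMod 2)),
    u = liftB ω a + liftB (ω ^ 2) b}

/-! ### Auxiliary lemmas -/

lemma F4.two : (2 : F4) = 0 := by
  have := CharP.cast_eq_zero F4 2
  exact_mod_cast this

lemma key_identity (ω : F4) (hω : ω ^ 2 = ω + 1) (X Y Z W : F4)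
    (hX : X ^ 2 = X) (hY : Y ^ 2 = Y) (hZ : Z ^ 2 = Z) (hW : W ^ 2 = W) :
    (ω*X + ω^2*Y) * (ω*Z + ω^2*W)^2 + (ω*X + ω^2*Y)^2 * (ω*Z + ω^2*W)
      = X*W + Z*Y := by
  have htwo : (2 : F4) = 0 := F4.two
  linear_combination
    (10*Y*W + 5*Y*Z + 6*Y*Z*W + 5*X*W + 2*X*Z + 4*X*Z*W + 6*X*Y*W + 4*X*Y*Z + 6*ω*Y*W + 3*ω*Y*Z + 4*ω*Y*Z*W + 3*ω*X*W + 2*ω*X*Z + 2*ω*X*Z*W + 4*ω*X*Y*W + 2*ω*X*Y*Z + 4*ω^2*Y*W + 2*ω^2*Y*Z + 2*ω^2*Y*Z*W + 2*ω^2*X*W + 2*ω^2*X*Z*W + 2*ω^2*X*Y*W + 2*ω^2*X*Y*Z + 2*ω^3*Y*W + ω^3*Y*Z + 2*ω^3*Y*Z*W + ω^3*X*W + 2*ω^3*X*Y*W + 2*ω^4*Y*W) * hω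
    + (ω^3*Z + ω^4*W) * hX + (ω^5*Z + ω^6*W) * hY
    + (ω^3*X + ω^4*Y) * hZ + (ω^5*X + ω^6*Y) * hW
    + (5*Y*W + 2*Y*Z + 3*Y*Z*W + 2*X*W + X*Z + 2*X*Z*W + 3*X*Y*W + 2*X*Y*Z + 8*ω*Y*W + 4*ω*Y*Z + 5*ω*Y*Z*W + 4*ω*X*W + 2*ω*X*Z + 3*ω*X*Z*W + 5*ω*X*Y*W + 3*ω*X*Y*Z) * htwo

def dotF (n : ℕ) : LinearMap.BilinForm (ZMod 2) (Fin n → ZMod 2) :=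
  LinearMap.mk₂ (ZMod 2) (fun u v => ∑ j, u j * v j)
    (by intro u u' v; simp [add_mul, Finset.sum_add_distrib])
    (by intro c u v; simp [Finset.mul_sum, mul_assoc])
    (by intro u v v'; simp [mul_add, Finset.sum_add_distrib])
    (by intro c u v; simp [Finset.mul_sum, mul_left_comm])

lemma dotF_apply {n : ℕ} (u v : Fin n → ZMod 2) : dotF n u v = ∑ j, u j * v j := rfl

lemma dotF_symm {n : ℕ} (u v : Fin n → ZMod 2) : dotF n u v = dotF n v u := by
  simp [dotF_apply, mul_comm]

lemma dotF_refl {n : ℕ} : (dotF n).IsRefl := fun u v h => by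
  rw [dotF_symm]; exact h

lemma dotF_nondeg {n : ℕ} : (dotF n).Nondegenerate := by
  refine (LinearMap.IsRefl.nondegenerate_iff_separatingLeft dotF_refl).mpr ?_
  intro u hu
  funext j
  have := hu (Pi.single j 1)
  simp only [dotF_apply, Pi.single_apply, mul_ite, mul_one, mul_zero] at this
  rwa [Finset.sum_ite_eq' Finset.univ j, if_pos (Finset.mem_univ j)] at this

lemma binDual_eq {n : ℕ} (B : Submodule (ZMod 2) (Fin n → ZMod 2)) :
    binDual (B : Set (Fin n → ZMod 2)) = ((dotF n).orthogonal B : Set (Fin n → ZMod 2)) := by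
  ext w
  constructor
  · intro hw b hb
    have := hw b hb
    simp only [LinearMap.BilinForm.IsOrtho, dotF_apply]
    rw [← this]; exact Finset.sum_congr rfl fun j _ => mul_comm _ _
  · intro hw b hb
    have := hw b hb
    simp only [LinearMap.BilinForm.IsOrtho, dotF_apply] at this
    rw [← this]; exact Finset.sum_congr rfl fun j _ => mul_comm _ _

lemma finrank_binDual {n : ℕ} (B : Submodule (ZMod 2) (Fin n → ZMod 2)) :
    Module.finrank (ZMod 2) ((dotF n).orthogonal B) = n - Module.finrank (ZMod 2) B := by
  rw [LinearMap.BilinForm.finrank_orthogonal dotF_nondeg]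
  congr 1
  simp [Module.finrank_fintype_fun_eq_card]

lemma binDual_double {n : ℕ} (B : Submodule (ZMod 2) (Fin n → ZMod 2)) :
    binDual (binDual (B : Set (Fin n → ZMod 2))) = (B : Set (Fin n → ZMod 2)) := by
  rw [binDual_eq, binDual_eq,
    LinearMap.BilinForm.orthogonal_orthogonal dotF_nondeg dotF_refl]

lemma binDual_antitone {n : ℕ} {B B' : Set (Fin n → ZMod 2)} (h : B ⊆ B') :
    binDual B' ⊆ binDual B := fun w hw b hb => hw b (h hb)

lemma binDual_zero_mem {n : ℕ} (B : Set (Fin n → ZMod 2)) : (0 : Fin n → ZMod 2) ∈ binDual B := by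
  intro b _; simp

lemma binDual_add_mem {n : ℕ} {B : Set (Fin n → ZMod 2)} {u v : Fin n → ZMod 2}
    (hu : u ∈ binDual B) (hv : v ∈ binDual B) : u + v ∈ binDual B := by
  intro b hb
  have := hu b hb; have h2 := hv b hb
  simp only [Pi.add_apply, add_mul, Finset.sum_add_distrib, this, h2, add_zero]

lemma map_sq (x : ZMod 2) :
    (algebraMap (ZMod 2) F4 x) ^ 2 = algebraMap (ZMod 2) F4 x := by
  have h : x ^ 2 = x := by fin_cases x <;> rfl
  rw [← map_pow, h]

lemma indep_omega {ω : F4} (hω : ω ^ 2 = ω + 1) (x y : ZMod 2)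
    (h : ω * algebraMap (ZMod 2) F4 x + ω ^ 2 * algebraMap (ZMod 2) F4 y = 0) :
    x = 0 ∧ y = 0 := by
  have hω0 : ω ≠ 0 := by
    intro h0
    rw [h0] at hω
    simp at hω
  have hz : ∀ z : ZMod 2, z = 0 ∨ z = 1 := by decide
  rcases hz x with rfl | rfl <;> rcases hz y with rfl | rfl <;>
    simp only [map_zero, map_one, mul_zero, mul_one, zero_add, add_zero] at h
  · exact ⟨rfl, rfl⟩
  · exact absurd ((pow_eq_zero_iff (two_ne_zero (α := ℕ))).mp h) hω0
  · exact absurd h hω0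
  · exfalso
    have h1 : (1 : F4) = 0 := by linear_combination h - hω - ω * F4.two
    exact one_ne_zero h1

lemma F4_decomp {ω : F4} (hω : ω ^ 2 = ω + 1) (c : F4) :
    ∃ x y : ZMod 2, c = ω * algebraMap (ZMod 2) F4 x + ω ^ 2 * algebraMap (ZMod 2) F4 y := by
  classical
  haveI : Fintype F4 := Fintype.ofFinite F4
  set g : ZMod 2 × ZMod 2 → F4 :=
    fun p => ω * algebraMap (ZMod 2) F4 p.1 + ω ^ 2 * algebraMap (ZMod 2) F4 p.2 with hg
  have hinj : Function.Injective g := by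
    rintro ⟨x, y⟩ ⟨x', y'⟩ hxy
    have h0 : ω * algebraMap (ZMod 2) F4 (x - x') + ω ^ 2 * algebraMap (ZMod 2) F4 (y - y') = 0 := by
      simp only [map_sub]
      simp only [hg] at hxy
      ring_nf
      ring_nf at hxy
      linear_combination hxy
    obtain ⟨h1, h2⟩ := indep_omega hω _ _ h0
    have : x = x' := by rwa [sub_eq_zero] at h1
    have : y = y' := by rwa [sub_eq_zero] at h2
    simp_all
  have hcard : Fintype.card (ZMod 2 × ZMod 2) = Fintype.card F4 := by
    have h4 : Nat.card F4 = 4 := by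
      have := GaloisField.card 2 2 (by norm_num)
      simpa using this
    rw [← Nat.card_eq_fintype_card, ← Nat.card_eq_fintype_card, h4]
    simp [Nat.card_eq_fintype_card]
  have hsurj : Function.Surjective g :=
    ((Fintype.bijective_iff_injective_and_card g).mpr ⟨hinj, hcard⟩).2
  obtain ⟨⟨x, y⟩, hxy⟩ := hsurj c
  exact ⟨x, y, hxy.symm⟩

lemma liftB_pair_injective {n : ℕ} {ω : F4} (hω : ω ^ 2 = ω + 1) :
    Function.Injective (fun p : (Fin n → ZMod 2) × (Fin n → ZMod 2) =>
      liftB ω p.1 + liftB (ω ^ 2) p.2) := by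
  rintro ⟨a, b⟩ ⟨a', b'⟩ h
  simp only at h
  have key : ∀ j, a j = a' j ∧ b j = b' j := by
    intro j
    have hj := congrFun h j
    simp only [Pi.add_apply, liftB] at hj
    have h0 : ω * algebraMap (ZMod 2) F4 (a j - a' j)
        + ω ^ 2 * algebraMap (ZMod 2) F4 (b j - b' j) = 0 := by
      simp only [map_sub]
      linear_combination hj
    obtain ⟨h1, h2⟩ := indep_omega hω _ _ h0
    exact ⟨by rwa [sub_eq_zero] at h1, by rwa [sub_eq_zero] at h2⟩
  have ha : a = a' := funext fun j => (key j).1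
  have hb : b = b' := funext fun j => (key j).2
  simp [ha, hb]

lemma trIP_formula {n : ℕ} {ω : F4} (hω : ω ^ 2 = ω + 1)
    (a b a' b' : Fin n → ZMod 2) :
    trIP (liftB ω a + liftB (ω ^ 2) b) (liftB ω a' + liftB (ω ^ 2) b')
      = algebraMap (ZMod 2) F4 (∑ j, (a j * b' j + a' j * b j)) := by
  rw [trIP, map_sum]
  refine Finset.sum_congr rfl fun j _ => ?_
  simp only [Pi.add_apply, liftB, map_add, map_mul]
  exact key_identity ω hω _ _ _ _ (map_sq _) (map_sq _) (map_sq _) (map_sq _)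

lemma wtB_le_wt {n : ℕ} {ω : F4} (hω : ω ^ 2 = ω + 1) (a b : Fin n → ZMod 2) :
    wtB a ≤ wt (liftB ω a + liftB (ω ^ 2) b)
      ∧ wtB b ≤ wt (liftB ω a + liftB (ω ^ 2) b) := by
  have hsupp : ∀ j, (liftB ω a + liftB (ω ^ 2) b) j = 0 → a j = 0 ∧ b j = 0 := by
    intro j hj
    simp only [Pi.add_apply, liftB] at hj
    exact indep_omega hω _ _ hj
  constructor
  · exact Set.ncard_le_ncard
      (fun j hj h0 => hj (hsupp j h0).1) (Set.toFinite _)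
  · exact Set.ncard_le_ncard
      (fun j hj h0 => hj (hsupp j h0).2) (Set.toFinite _)

lemma card_submodule {n : ℕ} (W : Submodule (ZMod 2) (Fin n → ZMod 2)) :
    Set.ncard (W : Set (Fin n → ZMod 2)) = 2 ^ Module.finrank (ZMod 2) W := by
  classical
  haveI : Fintype W := Fintype.ofFinite W
  rw [← Nat.card_coe_set_eq, SetLike.coe_sort_coe, Nat.card_eq_fintype_card,
    Module.card_eq_pow_finrank (K := ZMod 2), ZMod.card]

/-- The CSS construction: from binary linear codes C₁ ⊊ C₂, the code
C = ωC₁ + ω̄C₂⊥ is additive of size 2^(n-(k₂-k₁)), self-orthogonal with trace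
dual ω̄C₁⊥ + ωC₂, and every vector of C⊥ ∖ C has weight at least
min { dist(C₂∖C₁), dist(C₁⊥∖C₂⊥) }. -/
theorem css_construction (n k₁ k₂ : ℕ) (ω : F4) (hω : ω ^ 2 = ω + 1)
    (C₁ C₂ : Submodule (ZMod 2) (Fin n → ZMod 2)) (h12 : C₁ < C₂)
    (hk₁ : Module.finrank (ZMod 2) C₁ = k₁)
    (hk₂ : Module.finrank (ZMod 2) C₂ = k₂) :
    (∀ u ∈ cssCode ω C₁ C₂, ∀ v ∈ cssCode ω C₁ C₂, u + v ∈ cssCode ω C₁ C₂) ∧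
    Set.ncard (cssCode ω C₁ C₂) = 2 ^ (n - (k₂ - k₁)) ∧
    cssCode ω C₁ C₂ ⊆ trDual (cssCode ω C₁ C₂) ∧
    trDual (cssCode ω C₁ C₂) =
      {u | ∃ a ∈ binDual (C₁ : Set (Fin n → ZMod 2)), ∃ b ∈ C₂,
        u = liftB (ω ^ 2) a + liftB ω b} ∧
    ∀ v ∈ trDual (cssCode ω C₁ C₂) \ cssCode ω C₁ C₂,
      sInf (wtB '' (((C₂ : Set (Fin n → ZMod 2)) \ (C₁ : Set (Fin n → ZMod 2))) ∪
        (binDual (C₁ : Set (Fin n → ZMod 2)) \ binDual (C₂ : Set (Fin n → ZMod 2)))))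
        ≤ wt v := by
  have hCsub : (C₁ : Set (Fin n → ZMod 2)) ⊆ (C₂ : Set (Fin n → ZMod 2)) := h12.le
  have hdual21 : binDual (C₂ : Set (Fin n → ZMod 2)) ⊆ binDual (C₁ : Set (Fin n → ZMod 2)) :=
    binDual_antitone hCsub
  -- the trace-dual characterization, proved first
  have Hdual : trDual (cssCode ω C₁ C₂) =
      {u | ∃ a ∈ binDual (C₁ : Set (Fin n → ZMod 2)), ∃ b ∈ C₂,
        u = liftB (ω ^ 2) a + liftB ω b} := by
    ext u
    constructor
    · intro hu
      choose a b hab using fun j => F4_decomp hω (u j)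
      have hu' : u = liftB ω a + liftB (ω ^ 2) b := funext fun j => hab j
      have hb : b ∈ binDual (C₁ : Set (Fin n → ZMod 2)) := by
        intro a' ha'
        have hv : (liftB ω a' + liftB (ω ^ 2) (0 : Fin n → ZMod 2)) ∈ cssCode ω C₁ C₂ :=
          ⟨a', ha', 0, binDual_zero_mem _, rfl⟩
        have ht := hu _ hv
        rw [hu', trIP_formula hω] at ht
        have h0 : (∑ j, (a j * (0 : Fin n → ZMod 2) j + a' j * b j)) = 0 :=
          (algebraMap (ZMod 2) F4).injective (by rw [map_zero]; exact ht)
        simp only [Pi.zero_apply, mul_zero, zero_add] at h0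
        rw [← h0]
        exact Finset.sum_congr rfl fun j _ => mul_comm _ _
      have ha : a ∈ C₂ := by
        have ha' : a ∈ binDual (binDual (C₂ : Set (Fin n → ZMod 2))) := by
          intro b' hb'
          have hv : (liftB ω (0 : Fin n → ZMod 2) + liftB (ω ^ 2) b') ∈ cssCode ω C₁ C₂ :=
            ⟨0, zero_mem _, b', hb', rfl⟩
          have ht := hu _ hv
          rw [hu', trIP_formula hω] at ht
          have h0 : (∑ j, (a j * b' j + (0 : Fin n → ZMod 2) j * b j)) = 0 :=
            (algebraMap (ZMod 2) F4).injective (by rw [map_zero]; exact ht)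
          simpa only [Pi.zero_apply, zero_mul, add_zero] using h0
        rw [binDual_double C₂] at ha'
        exact ha'
      exact ⟨b, hb, a, ha, by rw [hu', add_comm]⟩
    · rintro ⟨a, ha, b, hb, rfl⟩ v ⟨a', ha', b', hb', rfl⟩
      rw [show liftB (ω ^ 2) a + liftB ω b = liftB ω b + liftB (ω ^ 2) a from add_comm _ _,
        trIP_formula hω]
      have h1 : (∑ j, b j * b' j) = 0 := by
        rw [← hb' b hb]
        exact Finset.sum_congr rfl fun j _ => mul_comm _ _
      have h2 : (∑ j, a' j * a j) = 0 := by
        rw [← ha a' ha']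
        exact Finset.sum_congr rfl fun j _ => mul_comm _ _
      rw [Finset.sum_add_distrib, h1, h2, add_zero, map_zero]
  refine ⟨?_, ?_, ?_, Hdual, ?_⟩
  · -- additivity
    rintro u ⟨a, ha, b, hb, rfl⟩ v ⟨a', ha', b', hb', rfl⟩
    refine ⟨a + a', add_mem ha ha', b + b', binDual_add_mem hb hb', ?_⟩
    funext j
    simp only [Pi.add_apply, liftB, map_add]
    ring
  · -- cardinality
    have himg : cssCode ω C₁ C₂ =
        (fun p : (Fin n → ZMod 2) × (Fin n → ZMod 2) => liftB ω p.1 + liftB (ω ^ 2) p.2) ''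
          ((C₁ : Set (Fin n → ZMod 2)) ×ˢ binDual (C₂ : Set (Fin n → ZMod 2))) := by
      ext u
      constructor
      · rintro ⟨a, ha, b, hb, rfl⟩
        exact ⟨(a, b), ⟨ha, hb⟩, rfl⟩
      · rintro ⟨⟨a, b⟩, ⟨ha, hb⟩, rfl⟩
        exact ⟨a, ha, b, hb, rfl⟩
    have hprod : ((C₁ : Set (Fin n → ZMod 2)) ×ˢ binDual (C₂ : Set (Fin n → ZMod 2))).ncard =
        (C₁ : Set (Fin n → ZMod 2)).ncard * (binDual (C₂ : Set (Fin n → ZMod 2))).ncard := by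
      rw [← Nat.card_coe_set_eq, ← Nat.card_coe_set_eq, ← Nat.card_coe_set_eq,
        Nat.card_congr (Equiv.Set.prod _ _), Nat.card_prod]
    have hc1 : (C₁ : Set (Fin n → ZMod 2)).ncard = 2 ^ k₁ := by
      rw [card_submodule, hk₁]
    have hc2 : (binDual (C₂ : Set (Fin n → ZMod 2))).ncard = 2 ^ (n - k₂) := by
      rw [binDual_eq, card_submodule, finrank_binDual, hk₂]
    have hk12 : k₁ < k₂ := by
      rw [← hk₁, ← hk₂]
      exact Submodule.finrank_lt_finrank_of_lt h12
    have hk2n : k₂ ≤ n := by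
      rw [← hk₂]
      have h := Submodule.finrank_le C₂
      simpa [Module.finrank_fintype_fun_eq_card] using h
    rw [himg, Set.ncard_image_of_injective _ (liftB_pair_injective hω), hprod, hc1, hc2,
      ← pow_add]
    congr 1
    omega
  · -- self-orthogonality
    rw [Hdual]
    rintro u ⟨a, ha, b, hb, rfl⟩
    exact ⟨b, hdual21 hb, a, hCsub ha, add_comm _ _⟩
  · -- minimum weight bound
    rintro v ⟨hvd, hvc⟩
    rw [Hdual] at hvd
    obtain ⟨a, ha, b, hb, rfl⟩ := hvd
    have hvw := wtB_le_wt hω b a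
    rw [show liftB ω b + liftB (ω ^ 2) a = liftB (ω ^ 2) a + liftB ω b from add_comm _ _] at hvw
    by_cases hbC : b ∈ (C₁ : Set (Fin n → ZMod 2))
    · -- then a ∉ binDual C₂, else v ∈ cssCode
      have haD : a ∉ binDual (C₂ : Set (Fin n → ZMod 2)) := by
        intro haD
        exact hvc ⟨b, hbC, a, haD, (add_comm _ _)⟩
      refine le_trans (Nat.sInf_le ?_) hvw.2
      exact ⟨a, Or.inr ⟨ha, haD⟩, rfl⟩
    · refine le_trans (Nat.sInf_le ?_) hvw.1
      exact ⟨b, Or.inl ⟨hb, hbC⟩, rfl⟩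
end
end

section
/- Let C ⊆ GF(4)ⁿ be an additive conjucyclic code, i.e., (u₀, …, u_{n−1}) ∈ C implies (ū_{n−1}, u₀, …, u_{n−2}) ∈ C. Define C' = {(Tr(ωu₀), …, Tr(ωu_{n−1}), Tr(ω̄u₀), …, Tr(ω̄u_{n−1})) : u ∈ C} ⊆ 𝔽₂^{2n}. Then C' is a binary linear cyclic code of length 2n (an 𝔽₂-subspace closed under the cyclic shift of coordinates), and C' is self-orthogonal with respect to the Euclidean inner product on 𝔽₂^{2n} if and only if C is self-orthogonal with respect to the trace inner product. -/
noncomputable section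

open Finset Polynomial

open Classical in
/-- The trace map GF(4) → GF(2), x ↦ x + x² (whose value lies in the prime
subfield {0,1} of GF(4)), with values read in ZMod 2. -/
def binTr (x : F4) : ZMod 2 := if x + x ^ 2 = 0 then 0 else 1

/-- The binary image (Tr(ωu₀),…,Tr(ωu_{n-1}),Tr(ω̄u₀),…,Tr(ω̄u_{n-1})) of an
additive code C ⊆ GF(4)ⁿ. -/
def conjuBin {n : ℕ} (ω : F4) (C : AddSubgroup (Fin n → F4)) :
    Set (Fin (n + n) → ZMod 2) :=
  {a | ∃ u ∈ C, a = Fin.append (fun i : Fin n => binTr (ω * u i))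
    (fun i : Fin n => binTr (ω ^ 2 * u i))}

/-! ### Auxiliary lemmas -/

set_option linter.unusedSectionVars false
set_option linter.unreachableTactic false
set_option linter.unnecessarySeqFocus false
set_option linter.unusedTactic false

lemma F4.pow4 (x : F4) : x ^ 4 = x := by
  letI : Fintype F4 := Fintype.ofFinite F4
  have h := FiniteField.pow_card x
  have hc : Fintype.card F4 = 4 := by
    have := GaloisField.card 2 2 (by norm_num)
    simpa [Nat.card_eq_fintype_card] using this
  rwa [hc] at h

lemma tr01 (x : F4) : x + x ^ 2 = 0 ∨ x + x ^ 2 = 1 := by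
  have hsq : (x + x ^ 2) ^ 2 = x + x ^ 2 := by
    linear_combination F4.pow4 x + x ^ 3 * F4.two
  have h : (x + x ^ 2) * ((x + x ^ 2) - 1) = 0 := by linear_combination hsq
  rcases mul_eq_zero.mp h with h | h
  · exact Or.inl h
  · exact Or.inr (by linear_combination h)

lemma binTr_zero : binTr 0 = 0 := by simp [binTr]

lemma binTr_one : binTr 1 = 0 := by
  unfold binTr
  rw [if_pos (by linear_combination F4.two)]

lemma binTr_eq_zero (x : F4) : binTr x = 0 ↔ x + x ^ 2 = 0 := by
  unfold binTr
  split_ifs with h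
  · simpa using h
  · simpa using h

lemma binTr_congr {x y : F4} (h : x + x ^ 2 = y + y ^ 2) : binTr x = binTr y := by
  unfold binTr; rw [h]

lemma binTr_add (x y : F4) : binTr (x + y) = binTr x + binTr y := by
  have hxy : (x + y) + (x + y) ^ 2 = (x + x ^ 2) + (y + y ^ 2) := by
    linear_combination x * y * F4.two
  unfold binTr
  rcases tr01 x with hx | hx <;> rcases tr01 y with hy | hy <;>
    rw [hxy, hx, hy] <;> norm_num [one_ne_zero] <;>
    first
      | rfl
      | (rw [if_pos (by linear_combination F4.two)]; decide)
      | (rw [if_neg (by intro h; exact one_ne_zero (by linear_combination h))]; decide)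

section Omega
variable {ω : F4} (hω : ω ^ 2 = ω + 1)
include hω

lemma hω3 : ω ^ 2 * ω = 1 := by linear_combination ω * hω + hω + ω * F4.two
lemma hω3' : ω * ω ^ 2 = 1 := by rw [mul_comm]; exact hω3 hω
lemma hω4 : ω ^ 2 * ω ^ 2 = ω := by linear_combination F4.pow4 ω
lemma hωω : ω * ω = ω ^ 2 := by ring

lemma binTr_ω : binTr ω = 1 := by
  unfold binTr
  rw [if_neg]
  intro h
  exact one_ne_zero (α := F4) (by linear_combination h - hω - ω * F4.two)

lemma binTr_ω2 : binTr (ω ^ 2) = 1 := by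
  rw [binTr_congr (show ω ^ 2 + (ω ^ 2) ^ 2 = ω + ω ^ 2 by linear_combination F4.pow4 ω)]
  exact binTr_ω hω

lemma cases4 (x : F4) : x = 0 ∨ x = 1 ∨ x = ω ∨ x = ω ^ 2 := by
  have h : x * ((x + 1) * ((x + ω) * (x + ω ^ 2))) = 0 := by
    linear_combination F4.pow4 x + (x^3 + 2*x^2 + x + x^2*ω + x*ω) * hω +
      (x^3*ω + x^3 + 2*x^2*ω + x^2 + x*ω + x) * F4.two
  rcases mul_eq_zero.mp h with h0 | h
  · exact Or.inl h0
  rcases mul_eq_zero.mp h with h1 | h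
  · exact Or.inr (Or.inl (by linear_combination h1 - F4.two))
  rcases mul_eq_zero.mp h with h2 | h3
  · exact Or.inr (Or.inr (Or.inl (by linear_combination h2 - ω * F4.two)))
  · exact Or.inr (Or.inr (Or.inr (by linear_combination h3 - ω ^ 2 * F4.two)))

lemma key (x y : F4) :
    binTr (ω * x) * binTr (ω * y) + binTr (ω ^ 2 * x) * binTr (ω ^ 2 * y)
      = binTr (x * y) := by
  rcases cases4 hω x with rfl | rfl | rfl | rfl <;>
    rcases cases4 hω y with rfl | rfl | rfl | rfl <;>
    simp only [mul_zero, mul_one, zero_mul, one_mul, hωω hω, hω3 hω, hω3' hω, hω4 hω,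
      binTr_zero, binTr_one, binTr_ω hω, binTr_ω2 hω] <;> decide

lemma binTr_mul_sq (x : F4) : binTr (ω * x ^ 2) = binTr (ω ^ 2 * x) :=
  binTr_congr (by linear_combination ω ^ 2 * F4.pow4 x - x ^ 2 * F4.pow4 ω)

lemma binTr_sq_sq (x : F4) : binTr (ω ^ 2 * x ^ 2) = binTr (ω * x) :=
  binTr_congr (by linear_combination ω ^ 4 * F4.pow4 x + x * F4.pow4 ω)

end Omega

def binTrHom : F4 →+ ZMod 2 where
  toFun := binTr
  map_zero' := binTr_zero
  map_add' := binTr_add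

lemma binTr_sum {α : Type*} (s : Finset α) (f : α → F4) :
    binTr (∑ i ∈ s, f i) = ∑ i ∈ s, binTr (f i) :=
  map_sum binTrHom f s

lemma val_sub_one {m : ℕ} [NeZero m] (i : Fin m) :
    ((i - 1 : Fin m) : ℕ) = if (i : ℕ) = 0 then m - 1 else (i : ℕ) - 1 := by
  obtain ⟨k, rfl⟩ : ∃ k, m = k + 1 := ⟨m - 1, by have := NeZero.pos m; omega⟩
  rw [Fin.coe_sub_one]
  simp only [Fin.ext_iff, Fin.val_zero]; simp

lemma append_apply {α : Type*} {n : ℕ} (f g : Fin n → α) (j : Fin (n + n)) :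
    Fin.append f g j =
      if h : (j : ℕ) < n then f ⟨(j : ℕ), h⟩
      else g ⟨(j : ℕ) - n, by omega⟩ := by
  split_ifs with h
  · conv_lhs => rw [show j = Fin.castAdd n ⟨(j : ℕ), h⟩ from Fin.ext rfl]
    exact Fin.append_left _ _ _
  · have hj : j = Fin.natAdd n ⟨(j : ℕ) - n, by omega⟩ := Fin.ext (by simp; omega)
    conv_lhs => rw [hj]
    exact Fin.append_right _ _ _

lemma trIP_eq {n : ℕ} (u v : Fin n → F4) :
    trIP u v = (∑ i, u i * (v i) ^ 2) + (∑ i, u i * (v i) ^ 2) ^ 2 := by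
  unfold trIP
  rw [sum_pow_char, ← Finset.sum_add_distrib]
  refine Finset.sum_congr rfl fun i _ => ?_
  linear_combination (- (u i) ^ 2) * F4.pow4 (v i)

open Fin.NatCast Fin.CommRing in
lemma shift_iter {n : ℕ} [NeZero n] (C : AddSubgroup (Fin n → F4))
    (hcc : ∀ u ∈ C,
      (fun i : Fin n => if i = 0 then (u (i - 1)) ^ 2 else u (i - 1)) ∈ C) :
    ∀ k : ℕ, k ≤ n → ∀ v ∈ C,
      (fun i : Fin n => if (i : ℕ) < k then (v (i - (k : Fin n))) ^ 2
        else v (i - (k : Fin n))) ∈ C := by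
  intro k
  induction k with
  | zero =>
    intro _ v hv
    have : (fun i : Fin n => if (i : ℕ) < 0 then (v (i - ((0 : ℕ) : Fin n))) ^ 2
        else v (i - ((0 : ℕ) : Fin n))) = v := by
      funext i; simp
    rw [this]; exact hv
  | succ k ih =>
    intro hk v hv
    have hw := hcc _ (ih (by omega) v hv)
    have heq : (fun i : Fin n =>
        if i = 0 then ((fun i : Fin n => if (i : ℕ) < k then (v (i - (k : Fin n))) ^ 2
          else v (i - (k : Fin n))) (i - 1)) ^ 2
        else (fun i : Fin n => if (i : ℕ) < k then (v (i - (k : Fin n))) ^ 2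
          else v (i - (k : Fin n))) (i - 1)) =
        (fun i : Fin n => if (i : ℕ) < k + 1 then (v (i - ((k + 1 : ℕ) : Fin n))) ^ 2
          else v (i - ((k + 1 : ℕ) : Fin n))) := by
      funext i
      have hsub : i - ((k + 1 : ℕ) : Fin n) = i - 1 - (k : Fin n) := by
        push_cast; ring
      by_cases hi : i = 0
      · subst hi
        have h01 : (((0 : Fin n) - 1 : Fin n) : ℕ) = n - 1 := by
          rw [val_sub_one]; simp
        have hnk : ¬ ((((0 : Fin n) - 1 : Fin n) : ℕ) < k) := by
          rw [h01]; omega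
        simp only [if_pos rfl, if_neg hnk, hsub]
        simp
      · have hne : (i : ℕ) ≠ 0 := fun h => hi (Fin.ext (by simpa using h))
        have hv1 : ((i - 1 : Fin n) : ℕ) = (i : ℕ) - 1 := by
          rw [val_sub_one, if_neg hne]
        simp only [if_neg hi, hv1, hsub]
        exact if_congr (by omega) rfl rfl
    rw [heq] at hw
    exact hw

open Fin.NatCast Fin.CommRing in
lemma conj_mem {n : ℕ} [NeZero n] (C : AddSubgroup (Fin n → F4))
    (hcc : ∀ u ∈ C,
      (fun i : Fin n => if i = 0 then (u (i - 1)) ^ 2 else u (i - 1)) ∈ C)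
    {v : Fin n → F4} (hv : v ∈ C) : (fun i => (v i) ^ 2) ∈ C := by
  have h := shift_iter C hcc n le_rfl v hv
  have heq : (fun i : Fin n => if (i : ℕ) < n then (v (i - ((n : ℕ) : Fin n))) ^ 2
      else v (i - ((n : ℕ) : Fin n))) = fun i => (v i) ^ 2 := by
    funext i
    rw [Fin.natCast_self, sub_zero, if_pos i.isLt]
  rwa [heq] at h

lemma sumIdentity {n : ℕ} {ω : F4} (hω : ω ^ 2 = ω + 1) (u v : Fin n → F4) :
    (∑ j : Fin (n + n),
      (Fin.append (fun i : Fin n => binTr (ω * u i))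
        (fun i : Fin n => binTr (ω ^ 2 * u i)) j) *
      (Fin.append (fun i : Fin n => binTr (ω * v i))
        (fun i : Fin n => binTr (ω ^ 2 * v i)) j)) = binTr (∑ i, u i * v i) := by
  rw [Fin.sum_univ_add]
  simp only [Fin.append_left, Fin.append_right]
  rw [← Finset.sum_add_distrib, binTr_sum]
  exact Finset.sum_congr rfl fun i _ => key hω (u i) (v i)


/-- From an additive conjucyclic code C ⊆ GF(4)ⁿ one obtains a binary linear
cyclic code C' of length 2n, which is Euclidean self-orthogonal iff C is
self-orthogonal for the trace inner product. -/
theorem conjucyclic_to_binary_cyclic (n : ℕ) [NeZero n] [NeZero (n + n)]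
    (ω : F4) (hω : ω ^ 2 = ω + 1)
    (C : AddSubgroup (Fin n → F4))
    (hcc : ∀ u ∈ C,
      (fun i : Fin n => if i = 0 then (u (i - 1)) ^ 2 else u (i - 1)) ∈ C) :
    (∀ a ∈ conjuBin ω C, ∀ b ∈ conjuBin ω C, a + b ∈ conjuBin ω C) ∧
    (∀ a ∈ conjuBin ω C, (fun i : Fin (n + n) => a (i - 1)) ∈ conjuBin ω C) ∧
    ((∀ a ∈ conjuBin ω C, ∀ b ∈ conjuBin ω C, ∑ j, a j * b j = 0) ↔
      (∀ u ∈ C, ∀ v ∈ C, trIP u v = 0)) := by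
  have hn : 0 < n := NeZero.pos n
  refine ⟨?_, ?_, ?_⟩
  · rintro a ⟨u, hu, rfl⟩ b ⟨v, hv, rfl⟩
    refine ⟨u + v, C.add_mem hu hv, ?_⟩
    funext j
    simp only [Pi.add_apply]
    rw [append_apply, append_apply, append_apply]
    split_ifs with h <;> simp [Pi.add_apply, mul_add, binTr_add]
  · rintro a ⟨u, hu, rfl⟩
    refine ⟨_, hcc u hu, ?_⟩
    funext j
    rw [append_apply, append_apply]
    have hj1 := val_sub_one j
    have h01 : (((0 : Fin n) - 1 : Fin n) : ℕ) = n - 1 := by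
      rw [val_sub_one]; simp
    by_cases h0 : (j : ℕ) = 0
    · rw [if_pos h0] at hj1
      have hlt : (j : ℕ) < n := by omega
      rw [dif_neg (by omega), dif_pos hlt]
      have hz : (⟨(j : ℕ), hlt⟩ : Fin n) = 0 := Fin.ext (by simpa using h0)
      rw [hz, if_pos rfl, binTr_mul_sq hω]
      refine congrArg (fun t => binTr (ω ^ 2 * u t)) (Fin.ext ?_)
      show ((j - 1 : Fin (n + n)) : ℕ) - n = (((0 : Fin n) - 1 : Fin n) : ℕ)
      rw [hj1, h01]; omega
    · rw [if_neg h0] at hj1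
      by_cases hlt : (j : ℕ) < n
      · rw [dif_pos (show ((j - 1 : Fin (n + n)) : ℕ) < n by omega), dif_pos hlt]
        rw [if_neg (show (⟨(j : ℕ), hlt⟩ : Fin n) ≠ 0 by
          exact fun h => h0 (by have := congrArg Fin.val h; simpa only [Fin.val_zero] using this))]
        refine congrArg (fun t => binTr (ω * u t)) (Fin.ext ?_)
        show ((j - 1 : Fin (n + n)) : ℕ) = (((⟨(j : ℕ), hlt⟩ : Fin n) - 1 : Fin n) : ℕ)
        rw [hj1, val_sub_one]
        simp [h0]
      · by_cases heq : (j : ℕ) = n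
        · rw [dif_pos (show ((j - 1 : Fin (n + n)) : ℕ) < n by omega), dif_neg hlt]
          split_ifs with h
          · rw [binTr_sq_sq hω]
            refine congrArg (fun t => binTr (ω * u t)) (Fin.ext ?_)
            rw [h]
            show ((j - 1 : Fin (n + n)) : ℕ) = (((0 : Fin n) - 1 : Fin n) : ℕ)
            rw [hj1, h01]; omega
          · refine absurd (Fin.ext ?_) h
            show (j : ℕ) - n = ((0 : Fin n) : ℕ)
            simp [heq]
        · have hgt : n < (j : ℕ) := by omega
          rw [dif_neg (show ¬ ((j - 1 : Fin (n + n)) : ℕ) < n by omega), dif_neg hlt]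
          split_ifs with h
          · exfalso
            have hh : (j : ℕ) - n = ((0 : Fin n) : ℕ) := congrArg Fin.val h
            simp at hh
            omega
          · refine congrArg (fun t => binTr (ω ^ 2 * u t)) (Fin.ext ?_)
            show ((j - 1 : Fin (n + n)) : ℕ) - n =
              (((⟨(j : ℕ) - n, by omega⟩ : Fin n) - 1 : Fin n) : ℕ)
            rw [hj1, val_sub_one]
            rw [if_neg (by simp; omega)]
            simp only [Fin.val_mk]
            omega
  · constructor
    · intro h u hu v hv
      have hw := conj_mem C hcc hv
      have hb := h _ ⟨u, hu, rfl⟩ _ ⟨_, hw, rfl⟩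
      rw [sumIdentity hω] at hb
      rw [trIP_eq]
      exact (binTr_eq_zero _).mp hb
    · rintro h a ⟨u, hu, rfl⟩ b ⟨v, hv, rfl⟩
      rw [sumIdentity hω, binTr_eq_zero]
      have hw := conj_mem C hcc hv
      have ht := h u hu _ hw
      rw [trIP_eq] at ht
      have hS : (∑ i, u i * ((fun i : Fin n => (v i) ^ 2) i) ^ 2) = ∑ i, u i * v i :=
        Finset.sum_congr rfl fun i _ => by
          simp only
          linear_combination u i * F4.pow4 (v i)
      rw [hS] at ht
      exact ht
end
end

section
/- Let C ⊆ GF(4)ⁿ be an additive self-orthogonal code. Then the shadow enumerator S(x,y) = (1/|C|) · Σ_{u ∈ C} (x+3y)^{n−wt(u)} (y−x)^{wt(u)}, regarded as a polynomial in ℚ[x,y], has all coefficients nonnegative. -/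
noncomputable section

open Finset Polynomial

/-!
Write `g b = x` for `b = 0` and `g b = y` otherwise. Then `x + 3y = ∑_b g b` and, for `a ≠ 0`,
`y - x = -∑_b (-1) ^ Tr (a b̄) g b`, since `b ↦ a b̄` permutes `GF(4)` and the nontrivial character
`(-1) ^ Tr` sums to zero. Expanding the product over coordinates turns the shadow enumerator into
`|C|⁻¹ ∑_v (∑_{u ∈ C} (-1) ^ (wt u + u ∗ v)) x ^ (n - wt v) y ^ wt v`. Over `GF(4)` one has
`wt (u + w) ≡ wt u + wt w + u ∗ w (mod 2)`, so on a self-orthogonal code `u ↦ (-1) ^ (wt u + u ∗ v)`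
is a character, and its sum over `C` is `0` or `|C|`.
-/

namespace F4

instance : Fintype F4 := Fintype.ofFinite F4

instance : DecidableEq F4 := Classical.decEq F4

theorem card_eq : Fintype.card F4 = 4 := by
  rw [← Nat.card_eq_fintype_card, GaloisField.card 2 2 two_ne_zero]; norm_num

theorem pow_four (a : F4) : a ^ 4 = a := by
  simpa [card_eq] using FiniteField.pow_card a

theorem pow_three {a : F4} (ha : a ≠ 0) : a ^ 3 = 1 :=
  mul_right_cancel₀ ha (by rw [← pow_succ, one_mul, pow_four])

theorem add_sq_eq_zero_iff {x : F4} : x + x ^ 2 = 0 ↔ x = 0 ∨ x = 1 := by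
  rw [show x + x ^ 2 = x * (x - 1) by rw [CharTwo.sub_eq_add]; ring, mul_eq_zero, sub_eq_zero]

theorem add_sq_eq_zero_or_one (x : F4) : x + x ^ 2 = 0 ∨ x + x ^ 2 = 1 := by
  have hidem : (x + x ^ 2) ^ 2 = x + x ^ 2 := by
    rw [add_pow_char, ← pow_mul, pow_four, add_comm]
  rcases mul_eq_zero.mp (show (x + x ^ 2) * (x + x ^ 2 - 1) = 0 by linear_combination hidem)
    with h | h
  · exact .inl h
  · exact .inr (sub_eq_zero.mp h)

theorem sq_injective : Function.Injective fun b : F4 => b ^ 2 := fun b c h => by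
  rw [← pow_four b, ← pow_four c, show 4 = 2 * 2 from rfl, pow_mul, pow_mul]
  exact congrArg (· ^ 2) h

theorem exists_ne_zero_ne_one : ∃ x : F4, x ≠ 0 ∧ x ≠ 1 := by
  by_contra! h
  have : (univ : Finset F4) ⊆ {0, 1} := fun x _ => by
    by_cases hx : x = 0
    · simp [hx]
    · simp [h x hx]
  simpa [card_eq] using card_le_card this

end F4

/-- `x ↦ (-1) ^ Tr x`. -/
def traceSign : AddChar F4 ℤ where
  toFun x := if x + x ^ 2 = 0 then 1 else -1
  map_zero_eq_one' := by simp
  map_add_eq_mul' x y := by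
    have hadd : (x + y) + (x + y) ^ 2 = (x + x ^ 2) + (y + y ^ 2) := by
      rw [add_pow_char]; ring
    rcases F4.add_sq_eq_zero_or_one x with hx | hx <;>
      rcases F4.add_sq_eq_zero_or_one y with hy | hy <;>
      simp [hadd, hx, hy, CharTwo.add_self_eq_zero]

theorem traceSign_eq_one_iff {x : F4} : traceSign x = 1 ↔ x = 0 ∨ x = 1 := by
  rw [← F4.add_sq_eq_zero_iff]
  by_cases h : x + x ^ 2 = 0 <;> norm_num [traceSign, h]

theorem traceSign_ne_zero : traceSign ≠ 0 := by
  obtain ⟨x, hx0, hx1⟩ := F4.exists_ne_zero_ne_one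
  exact AddChar.ne_zero_iff.mpr ⟨x, by rw [Ne, traceSign_eq_one_iff]; tauto⟩

theorem sum_traceSign_mul_sq {a : F4} (ha : a ≠ 0) : ∑ b, traceSign (a * b ^ 2) = 0 := by
  have hbij : Function.Bijective fun b : F4 => a * b ^ 2 :=
    Finite.injective_iff_bijective.mp fun b c h => F4.sq_injective (mul_left_cancel₀ ha h)
  rw [Fintype.sum_bijective _ hbij _ traceSign fun _ => rfl,
    AddChar.sum_eq_zero_iff_ne_zero.mpr traceSign_ne_zero]

def weightSign (a : F4) : ℤ := if a = 0 then 1 else -1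

@[simp] theorem weightSign_zero : weightSign 0 = 1 := if_pos rfl

theorem weightSign_add (a b : F4) :
    weightSign (a + b) = weightSign a * weightSign b * traceSign (a * b ^ 2) := by
  by_cases ha : a = 0
  · simp [ha]
  by_cases hb : b = 0
  · simp [hb]
  by_cases hab : a = b
  · subst hab
    have : a * a ^ 2 = 1 := by rw [← pow_succ', F4.pow_three ha]
    simp [weightSign, ha, this, CharTwo.add_self_eq_zero, traceSign_eq_one_iff.mpr (.inr rfl)]
  · have hsum : a + b ≠ 0 := fun h => hab (by linear_combination h - CharTwo.add_self_eq_zero b)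
    have hab0 : a * b ^ 2 ≠ 0 := mul_ne_zero ha (pow_ne_zero _ hb)
    have hab1 : a * b ^ 2 ≠ 1 := fun h =>
      hab (by linear_combination b * h - a * F4.pow_three hb)
    have : traceSign (a * b ^ 2) = -1 := by
      simp [traceSign, F4.add_sq_eq_zero_iff, hab0, hab1]
    simp [weightSign, ha, hb, hsum, this]

theorem AddChar.map_sum_eq_prod {ι A M : Type*} [AddCommMonoid A] [CommMonoid M]
    (ψ : AddChar A M) (s : Finset ι) (f : ι → A) : ψ (∑ i ∈ s, f i) = ∏ i ∈ s, ψ (f i) := by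
  classical
  induction s using Finset.induction_on with
  | empty => simp
  | insert i s hi ih => rw [sum_insert hi, prod_insert hi, AddChar.map_add_eq_mul, ih]

theorem trIP_eq_add_sq {n : ℕ} (u w : Fin n → F4) :
    trIP u w = (∑ j, u j * w j ^ 2) + (∑ j, u j * w j ^ 2) ^ 2 := by
  rw [sum_pow_char, trIP, ← sum_add_distrib]
  refine sum_congr rfl fun j _ => ?_
  linear_combination -u j ^ 2 * F4.pow_four (w j)

theorem prod_traceSign_eq_one_of_trIP_eq_zero {n : ℕ} {u w : Fin n → F4} (h : trIP u w = 0) :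
    ∏ j, traceSign (u j * w j ^ 2) = 1 := by
  rw [← AddChar.map_sum_eq_prod, traceSign_eq_one_iff, ← F4.add_sq_eq_zero_iff,
    ← trIP_eq_add_sq, h]

/-- `(-1) ^ (wt a + Tr (a b̄))`. -/
def shadowKernel (a b : F4) : ℤ := weightSign a * traceSign (a * b ^ 2)

theorem shadowKernel_add (a a' b : F4) :
    shadowKernel (a + a') b = shadowKernel a b * shadowKernel a' b * traceSign (a * a' ^ 2) := by
  simp only [shadowKernel, weightSign_add, add_mul, AddChar.map_add_eq_mul]
  ring

theorem sum_shadowKernel_smul {R : Type*} [CommRing R] (x y : R) (a : F4) :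
    ∑ b, shadowKernel a b • (if b = 0 then x else y) = if a = 0 then x + 3 * y else y - x := by
  have hsplit (b : F4) : (if b = 0 then x else y) = (if b = 0 then x - y else 0) + y := by
    split_ifs <;> simp
  have hsum : ∑ b, shadowKernel a b = if a = 0 then 4 else 0 := by
    by_cases ha : a = 0
    · simp [ha, shadowKernel, F4.card_eq]
    · simp [shadowKernel, ← mul_sum, sum_traceSign_mul_sq ha, ha]
  simp_rw [hsplit, smul_add, sum_add_distrib, ← sum_smul, hsum, smul_ite, smul_zero, sum_ite_eq']
  by_cases ha : a = 0
  · simp [ha, shadowKernel]; ring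
  · simp [ha, shadowKernel, weightSign]

/-- `(-1) ^ (wt u + u ∗ v)`. -/
def shadowSign {n : ℕ} (v u : Fin n → F4) : ℤ := ∏ j, shadowKernel (u j) (v j)

theorem wt_eq_card_filter {n : ℕ} (u : Fin n → F4) : wt u = #{j | u j ≠ 0} := by
  rw [wt, ← Set.ncard_coe_finset, coe_filter]
  simp

theorem prod_ite_eq_pow_mul_pow_wt {M : Type*} [CommMonoid M] {n : ℕ} (x y : M)
    (u : Fin n → F4) : ∏ j, (if u j = 0 then x else y) = x ^ (n - wt u) * y ^ wt u := by
  rw [prod_ite, prod_const, prod_const, wt_eq_card_filter]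
  congr 2
  have := card_filter_add_card_filter_not (s := univ) (fun j => u j = 0)
  simp only [card_univ, Fintype.card_fin, ne_eq] at this ⊢
  omega

theorem add_three_mul_pow_mul_sub_pow_eq_sum {R : Type*} [CommRing R] (x y : R) {n : ℕ}
    (u : Fin n → F4) :
    (x + 3 * y) ^ (n - wt u) * (y - x) ^ wt u =
      ∑ v, shadowSign v u • (x ^ (n - wt v) * y ^ wt v) := by
  simp_rw [← prod_ite_eq_pow_mul_pow_wt, ← sum_shadowKernel_smul x y, prod_univ_sum,
    Fintype.piFinset_univ, prod_smul, shadowSign]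

def shadowChar {n : ℕ} (C : AddSubgroup (Fin n → F4))
    (hso : (C : Set (Fin n → F4)) ⊆ trDual (C : Set (Fin n → F4))) (v : Fin n → F4) :
    AddChar C ℤ where
  toFun u := shadowSign v u
  map_zero_eq_one' := by simp [shadowSign, shadowKernel]
  map_add_eq_mul' u w := by
    simp only [shadowSign, AddSubgroup.coe_add, Pi.add_apply, shadowKernel_add, prod_mul_distrib,
      prod_traceSign_eq_one_of_trIP_eq_zero (hso u.2 w w.2), mul_one]

open scoped Classical in
theorem sum_shadowSign_nonneg {n : ℕ} (C : AddSubgroup (Fin n → F4))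
    (hso : (C : Set (Fin n → F4)) ⊆ trDual (C : Set (Fin n → F4))) (v : Fin n → F4) :
    0 ≤ ∑ u : C, shadowSign v u := by
  change 0 ≤ ∑ u, shadowChar C hso v u
  rw [AddChar.sum_eq_ite]
  split_ifs <;> positivity

/-- The shadow enumerator of a self-orthogonal additive code over GF(4) has
nonnegative coefficients. -/
theorem shadow_enumerator_nonneg (n : ℕ) (C : AddSubgroup (Fin n → F4))
    (hso : (C : Set (Fin n → F4)) ⊆ trDual (C : Set (Fin n → F4)))
    (m : Fin 2 →₀ ℕ) :
    0 ≤ MvPolynomial.coeff m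
      ((Nat.card C : ℚ)⁻¹ •
        ∑ u ∈ ((C : Set (Fin n → F4))).toFinite.toFinset,
          (MvPolynomial.X 0 + 3 * MvPolynomial.X 1) ^ (n - wt u) *
            (MvPolynomial.X 1 - MvPolynomial.X 0) ^ (wt u) :
        MvPolynomial (Fin 2) ℚ) := by
  classical
  set T := ((C : Set (Fin n → F4))).toFinite.toFinset
  have hcode : ∀ v, 0 ≤ ∑ u ∈ T, shadowSign v u := fun v => by
    rw [sum_subtype T fun u => Set.Finite.mem_toFinset _]
    exact sum_shadowSign_nonneg C hso v
  simp_rw [add_three_mul_pow_mul_sub_pow_eq_sum]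
  rw [sum_comm]
  simp_rw [← sum_smul, MvPolynomial.coeff_smul, MvPolynomial.coeff_sum, MvPolynomial.coeff_smul]
  have hmono : ∀ a b : ℕ, 0 ≤ MvPolynomial.coeff m
      (MvPolynomial.X 0 ^ a * MvPolynomial.X 1 ^ b : MvPolynomial (Fin 2) ℚ) := fun a b => by
    rw [MvPolynomial.X_pow_eq_monomial, MvPolynomial.X_pow_eq_monomial,
      MvPolynomial.monomial_mul, MvPolynomial.coeff_monomial]
    positivity
  exact smul_nonneg (by positivity) (sum_nonneg fun v _ => smul_nonneg (hcode v) (hmono _ _))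
end
end
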